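/- Bound for sorted coefficients via Abel summation: let n ≥ 2 be an integer, C > 0, and Δ_{(1)} ≥ Δ_{(2)} ≥ … ≥ Δ_{(n−1)} > 0 with Δ_{(n)} = 0. If (x_1, …, x_n) ∈ ℕ^n satisfies ∑_{i=1}^j x_i ≤ C/Δ_{(j)}² + 1 for every j < n with x_j > 0, then ∑_{i=1}^n x_i·Δ_{(i)} ≤ Δ_{(1)} + C/Δ_{(1)} + C·∑_{i=2}^{n−1} (1/Δ_{(i)}² − 1/Δ_{(i−1)}²)·Δ_{(i)}. -/
import Mathlib


/-- Feasibility for the linear integer program: `(x_1, …, x_n) ∈ ℕ^n` is feasible for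
the gap vector `D` and constant `C` when `∑_{i=1}^j x_i ≤ C / D_j² + 1` for every
index `j < n` with `x_j > 0`. -/
def Feasible (n : ℕ) (C : ℝ) (D : ℕ → ℝ) (x : ℕ → ℕ) : Prop :=
  ∀ j, 1 ≤ j → j < n → 0 < x j →
    (∑ i ∈ Finset.Icc 1 j, (x i : ℝ)) ≤ C / (D j) ^ 2 + 1

/-- **Bound for sorted coefficients via Abel summation.** Let `n ≥ 2`, `C > 0` and
`D_1 ≥ D_2 ≥ … ≥ D_{n-1} > 0` with `D_n = 0`.  Every feasible `(x_1, …, x_n) ∈ ℕ^n`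
satisfies `∑_{i=1}^n x_i D_i ≤ D_1 + C/D_1 + C ∑_{i=2}^{n-1} (1/D_i² - 1/D_{i-1}²) D_i`. -/
theorem sorted_coefficients_bound
    (n : ℕ) (hn : 2 ≤ n) (C : ℝ) (hC : 0 < C) (D : ℕ → ℝ)
    (hanti : ∀ i j, 1 ≤ i → i ≤ j → j ≤ n - 1 → D j ≤ D i)
    (hpos : 0 < D (n - 1)) (hDn : D n = 0)
    (x : ℕ → ℕ) (hx : Feasible n C D x) :
    (∑ i ∈ Finset.Icc 1 n, (x i : ℝ) * D i)
      ≤ D 1 + C / D 1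
          + C * ∑ i ∈ Finset.Icc 2 (n - 1),
              (1 / (D i) ^ 2 - 1 / (D (i - 1)) ^ 2) * D i := by
  obtain ⟨m, rfl⟩ : ∃ m, n = m + 1 := ⟨n - 1, by omega⟩
  have hm : 1 ≤ m := by omega
  simp only [Nat.add_sub_cancel] at hanti hpos ⊢
  set S : ℕ → ℝ := fun j => ∑ i ∈ Finset.Icc 1 j, (x i : ℝ) with hSdef
  set g : ℕ → ℝ := fun j => if j = 0 then 0 else C / D j ^ 2 + 1 with hgdef
  have hDpos : ∀ i, 1 ≤ i → i ≤ m → 0 < D i := fun i h1 h2 =>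
    lt_of_lt_of_le hpos (hanti i m h1 h2 le_rfl)
  have hgm : ∀ k, 1 ≤ k → k + 1 ≤ m → g k ≤ g (k + 1) := by
    intro k h1 h2
    have hdk := hDpos k h1 (by omega)
    have hdk1 := hDpos (k + 1) (by omega) h2
    have hle : D (k + 1) ≤ D k := hanti k (k + 1) h1 (by omega) h2
    simp only [hgdef]
    rw [if_neg (by omega), if_neg (by omega)]
    have : C / D k ^ 2 ≤ C / D (k + 1) ^ 2 := by
      apply div_le_div_of_nonneg_left hC.le (by positivity)
      nlinarith
    linarith
  have hstep : ∀ k, S (k + 1) = S k + (x (k + 1) : ℝ) := by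
    intro k
    simp only [hSdef]
    rw [Finset.sum_Icc_succ_top (by omega)]
  have hSle : ∀ j, 1 ≤ j → j ≤ m → S j ≤ g j := by
    intro j
    induction j with
    | zero => intro h; omega
    | succ k ih =>
      intro _ hkm
      by_cases hxk : 0 < x (k + 1)
      · have h := hx (k + 1) (by omega) (by omega) hxk
        simp only [hSdef, hgdef, if_neg (by omega : ¬ k + 1 = 0)]
        exact h
      · have hx0 : (x (k + 1) : ℝ) = 0 := by
          norm_cast; omega
        rcases Nat.eq_zero_or_pos k with hk0 | hk1
        · subst hk0
          have hd1 := hDpos 1 le_rfl hm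
          rw [hstep 0, hx0]
          have hS0 : S 0 = 0 := by simp [hSdef]
          rw [hS0]
          simp only [hgdef, if_neg (by omega : ¬ (0:ℕ) + 1 = 0), add_zero]
          positivity
        · have h1 := ih hk1 (by omega)
          have h2 := hgm k hk1 hkm
          rw [hstep k, hx0]; linarith
  have hmain : ∀ M, 1 ≤ M → M ≤ m →
      (∑ i ∈ Finset.Icc 1 M, (x i : ℝ) * D i) + (g M - S M) * D M ≤
        ∑ i ∈ Finset.Icc 1 M, (g i - g (i - 1)) * D i := by
    intro M hM
    induction M, hM using Nat.le_induction with
    | base =>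
      intro _
      have hS1 : S 1 = (x 1 : ℝ) := by simp [hSdef]
      simp only [Finset.Icc_self, Finset.sum_singleton, hS1]
      have hg0 : g (1 - 1) = 0 := by simp [hgdef]
      rw [hg0]
      ring_nf
      exact le_rfl
    | succ k hk ih =>
      intro hkm
      have ihh := ih (by omega)
      rw [Finset.sum_Icc_succ_top (by omega : 1 ≤ k + 1),
        Finset.sum_Icc_succ_top (by omega : 1 ≤ k + 1)]
      simp only [Nat.add_sub_cancel]
      have hDle : D (k + 1) ≤ D k := hanti k (k + 1) hk (by omega) hkm
      have hgS : S k ≤ g k := hSle k hk (by omega)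
      have h1 : (g k - S k) * D (k + 1) ≤ (g k - S k) * D k :=
        mul_le_mul_of_nonneg_left hDle (by linarith)
      rw [hstep k]
      ring_nf
      ring_nf at ihh h1
      linarith
  have hfin := hmain m hm le_rfl
  have hgSm : 0 ≤ (g m - S m) * D m :=
    mul_nonneg (by linarith [hSle m hm le_rfl]) hpos.le
  have hLHS : (∑ i ∈ Finset.Icc 1 (m + 1), (x i : ℝ) * D i)
      = ∑ i ∈ Finset.Icc 1 m, (x i : ℝ) * D i := by
    rw [Finset.sum_Icc_succ_top (by omega), hDn, mul_zero, add_zero]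
  have hsplit : Finset.Icc 1 m = insert 1 (Finset.Icc 2 m) := by
    ext y; simp only [Finset.mem_Icc, Finset.mem_insert]; omega
  have hd1 : (0:ℝ) < D 1 := hDpos 1 le_rfl hm
  have hRHS : (∑ i ∈ Finset.Icc 1 m, (g i - g (i - 1)) * D i)
      = D 1 + C / D 1 + C * ∑ i ∈ Finset.Icc 2 m,
          (1 / (D i) ^ 2 - 1 / (D (i - 1)) ^ 2) * D i := by
    rw [hsplit, Finset.sum_insert (by simp)]
    have h1 : (g 1 - g (1 - 1)) * D 1 = D 1 + C / D 1 := by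
      simp only [hgdef]
      norm_num
      field_simp
      ring
    rw [h1, Finset.mul_sum]
    congr 1
    apply Finset.sum_congr rfl
    intro i hi
    rw [Finset.mem_Icc] at hi
    simp only [hgdef, if_neg (by omega : ¬ i = 0), if_neg (by omega : ¬ i - 1 = 0)]
    ring
  rw [hLHS, ← hRHS]
  linarith
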